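/- A regular semigroup S is L-unipotent if and only if for every a ∈ S, every inverse a' of a, and every idempotent e ∈ S, one has a*a'*e*a = e*a. -/

import Mathlib

/-- The principal left ideal `Sa = {x*a : x ∈ S}` of an element of a semigroup. -/
def leftIdeal {S : Type*} [Semigroup S] (a : S) : Set S := {y | ∃ x : S, y = x * a}

/-- The principal right ideal `aS = {a*x : x ∈ S}` of an element of a semigroup. -/
def rightIdeal {S : Type*} [Semigroup S] (a : S) : Set S := {y | ∃ x : S, y = a * x}

/-- A semigroup is (von Neumann) regular if every element `a` has some `x` with `a*x*a = a`. -/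
def IsRegularSemigroup (S : Type*) [Semigroup S] : Prop :=
  ∀ a : S, ∃ x : S, a * x * a = a

/-- A regular semigroup is `L`-unipotent if any two `L`-related idempotents are equal. -/
def IsLUnipotent (S : Type*) [Semigroup S] : Prop :=
  IsRegularSemigroup S ∧
    ∀ e f : S, e * e = e → f * f = f → leftIdeal e = leftIdeal f → e = f

/-!
For the forward direction, the key fact is that `g * e * g = e * g` for idempotents `e, g`:
with `x` an inverse of `e * g`, the idempotent `v = g * x * e` satisfies `v * e = v`, so
`e * v` is an idempotent `L`-related to `v`, whence `e * v = v`; then `v * g = e * g`, and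
`g * v = v` gives `g * e * g = g * v * g = v * g = e * g`. Taking `g = a * a'` yields the identity.
Conversely, `L`-related idempotents `e, f` satisfy `e * f = e` and `f * e = f`, and the identity
for `a = a' = e` reads `e * f * e = f * e`, i.e. `e = f`.
-/

section

variable {S : Type*} [Semigroup S]

theorem IsRegularSemigroup.exists_inverse (hS : IsRegularSemigroup S) (a : S) :
    ∃ x : S, a * x * a = a ∧ x * a * x = x := by
  obtain ⟨y, hy⟩ := hS a
  refine ⟨y * a * y, ?_, ?_⟩
  · calc a * (y * a * y) * a = a * y * a * y * a := by simp only [mul_assoc]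
      _ = a := by rw [hy, hy]
  · calc y * a * y * a * (y * a * y) = y * (a * y * a) * (y * a * y) := by simp only [mul_assoc]
      _ = y * a * (y * a * y) := by rw [hy]
      _ = y * (a * y * a) * y := by simp only [mul_assoc]
      _ = y * a * y := by rw [hy]

theorem self_mem_leftIdeal {e : S} (he : IsIdempotentElem e) : e ∈ leftIdeal e :=
  ⟨e, he.symm⟩

theorem mul_eq_left_of_mem_leftIdeal {e f : S} (hf : IsIdempotentElem f)
    (h : e ∈ leftIdeal f) : e * f = e := by
  obtain ⟨c, rfl⟩ := h
  rw [mul_assoc, hf.eq]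

theorem leftIdeal_eq_of_mul_eq_left {a b : S} (hab : a * b = a) (hba : b * a = b) :
    leftIdeal a = leftIdeal b := by
  ext y
  constructor
  · rintro ⟨x, rfl⟩
    exact ⟨x * a, by rw [mul_assoc, hab]⟩
  · rintro ⟨x, rfl⟩
    exact ⟨x * b, by rw [mul_assoc, hba]⟩

namespace IsLUnipotent

theorem mul_eq_right_of_mul_eq_left (hU : IsLUnipotent S) {α β : S}
    (hα : IsIdempotentElem α) (h : α * β = α) : β * α = α := by
  have hβα : IsIdempotentElem (β * α) := by
    calc β * α * (β * α) = β * (α * β) * α := by simp only [mul_assoc]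
      _ = β * α := by rw [h, mul_assoc, hα.eq]
  refine hU.2 _ _ hβα hα (leftIdeal_eq_of_mul_eq_left ?_ ?_)
  · rw [mul_assoc, hα.eq]
  · rw [← mul_assoc, h, hα.eq]

theorem mul_mul_eq_mul (hU : IsLUnipotent S) {e g : S} (he : IsIdempotentElem e)
    (hg : IsIdempotentElem g) : g * e * g = e * g := by
  obtain ⟨x, hx, hx'⟩ := hU.1.exists_inverse (e * g)
  set v := g * x * e
  have hv : IsIdempotentElem v := by
    calc g * x * e * (g * x * e) = g * (x * (e * g) * x) * e := by simp only [mul_assoc]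
      _ = v := by rw [hx']
  have hve : v * e = v := by rw [mul_assoc, he.eq]
  have hgv : g * v = v := by simp only [v, ← mul_assoc, hg.eq]
  have hev : e * v = v := hU.mul_eq_right_of_mul_eq_left hv hve
  have hvg : v * g = e * g := by
    calc v * g = e * g * x * (e * g) := by rw [← hev]; simp only [v, mul_assoc]
      _ = e * g := hx
  calc g * e * g = g * (e * g) := mul_assoc _ _ _
    _ = v * g := by rw [← hvg, ← mul_assoc, hgv]
    _ = e * g := hvg

theorem mul_mul_mul_eq (hU : IsLUnipotent S) {a a' e : S} (ha : a * a' * a = a)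
    (he : IsIdempotentElem e) : a * a' * e * a = e * a := by
  have hg : IsIdempotentElem (a * a') := by
    calc a * a' * (a * a') = a * a' * a * a' := by simp only [mul_assoc]
      _ = a * a' := by rw [ha]
  calc a * a' * e * a = a * a' * e * (a * a') * a := by simp only [mul_assoc, ha]
    _ = e * a := by rw [hU.mul_mul_eq_mul he hg, mul_assoc, ha]

end IsLUnipotent

theorem isLUnipotent_of_forall_mul_mul_mul_eq (hS : IsRegularSemigroup S)
    (h : ∀ a a' e : S, (a * a' * a = a ∧ a' * a * a' = a') → e * e = e →
      a * a' * e * a = e * a) : IsLUnipotent S := by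
  refine ⟨hS, fun e f he hf hL => ?_⟩
  have hef : e * f = e := mul_eq_left_of_mem_leftIdeal hf (hL ▸ self_mem_leftIdeal he)
  have hfe : f * e = f := mul_eq_left_of_mem_leftIdeal he (hL ▸ self_mem_leftIdeal hf)
  have hee : e * e * e = e := by rw [he, he]
  have hefe := h e e f ⟨hee, hee⟩ hf
  rwa [he, hef, he, hfe] at hefe

end

/-- A regular semigroup is `L`-unipotent iff `a*a'*e*a = e*a` for all `a`, every inverse
`a'` of `a`, and every idempotent `e`. -/
theorem stmt9 {S : Type*} [Semigroup S] (hS : IsRegularSemigroup S) :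
    IsLUnipotent S ↔ ∀ a a' e : S,
      (a * a' * a = a ∧ a' * a * a' = a') → e * e = e →
      a * a' * e * a = e * a :=
  ⟨fun hU _ _ _ ha he => hU.mul_mul_mul_eq ha.1 he, isLUnipotent_of_forall_mul_mul_mul_eq hS⟩
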